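/- An element x ∈ Aut(T) lies in U if and only if (x, x⁻¹) ∈ G, where G = ⟨⟨a₁,a₃⟩⟩ and U is the normal closure of ⟨⟨a₂a₃⁻¹⟩⟩ in G. -/

import Mathlib

open Equiv

/-- Vertices of the infinite rooted binary tree: finite words over `Bool`.
The parent of a nonempty word is `dropLast`. -/
abbrev Wd := List Bool

/-- The group `Ω = Aut(T)` of automorphisms of the infinite rooted binary tree,
realized as the subgroup of permutations of the vertex set preserving length
(levels) and the parent relation. -/
def OmegaSG : Subgroup (Equiv.Perm Wd) where
  carrier := {σ | (∀ w, (σ w).length = w.length) ∧ ∀ w, (σ w).dropLast = σ w.dropLast}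
  one_mem' := ⟨fun _ => rfl, fun _ => rfl⟩
  mul_mem' := by
    rintro σ τ ⟨hσl, hσd⟩ ⟨hτl, hτd⟩
    refine ⟨fun w => ?_, fun w => ?_⟩
    · simp [Equiv.Perm.mul_apply, hσl, hτl]
    · simp [Equiv.Perm.mul_apply, hσd, hτd]
  inv_mem' := by
    rintro σ ⟨hl, hd⟩
    refine ⟨fun w => ?_, fun w => ?_⟩
    · have := hl (σ⁻¹ w)
      rw [show σ (σ⁻¹ w) = w from (Equiv.eq_symm_apply σ).mp rfl] at this
      exact this.symm
    · apply σ.injective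
      have := hd (σ⁻¹ w)
      rw [show σ (σ⁻¹ w) = w from (Equiv.eq_symm_apply σ).mp rfl] at this
      rw [← this]
      simp

/-- The section pairing: `(u,v)` acts as `u` on the subtree rooted at `false`
and as `v` on the subtree rooted at `true`. -/
def pairFun (f g : Wd → Wd) : Wd → Wd
  | [] => []
  | false :: w => false :: f w
  | true :: w => true :: g w

@[simp] lemma pairFun_nil (f g : Wd → Wd) : pairFun f g [] = [] := rfl
@[simp] lemma pairFun_false (f g : Wd → Wd) (w : Wd) :
    pairFun f g (false :: w) = false :: f w := rfl
@[simp] lemma pairFun_true (f g : Wd → Wd) (w : Wd) :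
    pairFun f g (true :: w) = true :: g w := rfl

lemma pairFun_comp (f g f' g' : Wd → Wd) (hf : ∀ w, f (f' w) = w) (hg : ∀ w, g (g' w) = w) :
    ∀ w, pairFun f g (pairFun f' g' w) = w := by
  rintro (_ | ⟨(_|_), w⟩) <;> simp [hf, hg]

/-- The permutation `(u,v)` of the tree. -/
def pairPerm (u v : Equiv.Perm Wd) : Equiv.Perm Wd where
  toFun := pairFun u v
  invFun := pairFun u.symm v.symm
  left_inv := pairFun_comp _ _ _ _ (fun w => u.symm_apply_apply w) (fun w => v.symm_apply_apply w)
  right_inv := pairFun_comp _ _ _ _ (fun w => u.apply_symm_apply w) (fun w => v.apply_symm_apply w)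

@[simp] lemma pairPerm_apply (u v : Equiv.Perm Wd) (w : Wd) :
    pairPerm u v w = pairFun u v w := rfl

/-- The first-level swap `σ`. -/
def swapPerm : Equiv.Perm Wd where
  toFun w := match w with | [] => [] | b :: w => (!b) :: w
  invFun w := match w with | [] => [] | b :: w => (!b) :: w
  left_inv := by rintro (_ | ⟨b, w⟩) <;> simp
  right_inv := by rintro (_ | ⟨b, w⟩) <;> simp

@[simp] lemma swapPerm_nil : swapPerm [] = [] := rfl
@[simp] lemma swapPerm_cons (b : Bool) (w : Wd) : swapPerm (b :: w) = (!b) :: w := rfl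

lemma swapPerm_mem : swapPerm ∈ OmegaSG := by
  constructor
  · rintro (_ | ⟨b, w⟩) <;> simp
  · rintro (_ | ⟨b, w⟩)
    · simp
    · rcases eq_or_ne w [] with rfl | hw
      · simp
      · simp only [swapPerm_cons, List.dropLast_cons_of_ne_nil hw]

lemma mem_omega_length {u : Equiv.Perm Wd} (hu : u ∈ OmegaSG) (w : Wd) :
    (u w).length = w.length := hu.1 w

lemma mem_omega_ne_nil {u : Equiv.Perm Wd} (hu : u ∈ OmegaSG) {w : Wd} (hw : w ≠ []) :
    u w ≠ [] := by
  intro h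
  exact hw (List.eq_nil_of_length_eq_zero (by rw [← hu.1 w, h]; rfl))

lemma mem_omega_nil {u : Equiv.Perm Wd} (hu : u ∈ OmegaSG) : u [] = [] :=
  List.eq_nil_of_length_eq_zero (hu.1 [])

lemma pairPerm_mem {u v : Equiv.Perm Wd} (hu : u ∈ OmegaSG) (hv : v ∈ OmegaSG) :
    pairPerm u v ∈ OmegaSG := by
  constructor
  · rintro (_ | ⟨(_|_), w⟩) <;> simp [hu.1, hv.1]
  · rintro (_ | ⟨(_|_), w⟩)
    · simp
    · rcases eq_or_ne w [] with rfl | hw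
      · simp [mem_omega_nil hu]
      · simp only [pairPerm_apply, pairFun_false, List.dropLast_cons_of_ne_nil hw,
          List.dropLast_cons_of_ne_nil (mem_omega_ne_nil hu hw)]
        rw [hu.2]
    · rcases eq_or_ne w [] with rfl | hw
      · simp [mem_omega_nil hv]
      · simp only [pairPerm_apply, pairFun_true, List.dropLast_cons_of_ne_nil hw,
          List.dropLast_cons_of_ne_nil (mem_omega_ne_nil hv hw)]
        rw [hv.2]

/-- `(u,v)` as an element of `Ω`. -/
def pairOm (u v : OmegaSG) : OmegaSG := ⟨pairPerm u.1 v.1, pairPerm_mem u.2 v.2⟩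

/-- `σ` as an element of `Ω`. -/
def swapOm : OmegaSG := ⟨swapPerm, swapPerm_mem⟩

/-! ### Levels, restriction, sign, odometers -/

/-- Level `n` of the tree: words of length `n`. -/
abbrev Lv (n : ℕ) := {w : Wd // w.length = n}

instance fintypeLv (n : ℕ) : Fintype (Lv n) := by
  apply Fintype.ofSurjective (fun g : Fin n → Bool => (⟨List.ofFn g, List.length_ofFn (f := g)⟩ : Lv n))
  rintro ⟨w, rfl⟩
  exact ⟨w.get, Subtype.ext (List.ofFn_get w)⟩

/-- The permutation induced by `g ∈ Ω` on level `n`. -/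
def levelPerm (n : ℕ) (g : OmegaSG) : Equiv.Perm (Lv n) where
  toFun w := ⟨g.1 w.1, by rw [mem_omega_length g.2, w.2]⟩
  invFun w := ⟨(g⁻¹ : OmegaSG).1 w.1, by rw [mem_omega_length (g⁻¹ : OmegaSG).2, w.2]⟩
  left_inv w := Subtype.ext (by simp)
  right_inv w := Subtype.ext (by simp)

/-- Restriction to level `n` as a group homomorphism. -/
def levelHom (n : ℕ) : OmegaSG →* Equiv.Perm (Lv n) where
  toFun := levelPerm n
  map_one' := Equiv.ext fun w => Subtype.ext rfl
  map_mul' g h := Equiv.ext fun w => Subtype.ext rfl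

/-- `sgn_n`: the sign of the permutation induced on level `n`. -/
noncomputable def sgn (n : ℕ) (g : OmegaSG) : ℤˣ := Equiv.Perm.sign (levelPerm n g)

/-- An odometer: an element acting transitively on every level of the tree. -/
def IsOdometer (g : OmegaSG) : Prop :=
  ∀ n : ℕ, ∀ v w : Lv n, ∃ k : ℤ, ((g ^ k : OmegaSG) : Equiv.Perm Wd) v.1 = w.1

/-! ### The profinite topology on `Aut(T)` -/

instance : TopologicalSpace Wd := ⊥
instance : DiscreteTopology Wd := ⟨rfl⟩
instance : TopologicalSpace (Equiv.Perm Wd) :=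
  TopologicalSpace.induced (fun g => (g : Wd → Wd)) Pi.topologicalSpace

lemma continuous_permCoe : Continuous (fun g : Equiv.Perm Wd => (g : Wd → Wd)) :=
  continuous_induced_dom

lemma continuous_permApply (w : Wd) : Continuous fun g : Equiv.Perm Wd => g w :=
  (continuous_apply w).comp continuous_permCoe

instance : IsTopologicalGroup (Equiv.Perm Wd) where
  continuous_mul := by
    apply continuous_induced_rng.2
    apply continuous_pi
    intro w
    rw [continuous_discrete_rng]
    intro y
    have h : (fun p : Equiv.Perm Wd × Equiv.Perm Wd => ((p.1 * p.2 : Equiv.Perm Wd) : Wd → Wd) w) ⁻¹' {y}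
        = ⋃ x : Wd, {p : Equiv.Perm Wd × Equiv.Perm Wd | p.2 w = x} ∩ {p | p.1 x = y} := by
      ext p
      simp only [Set.mem_preimage, Set.mem_singleton_iff, Set.mem_iUnion, Set.mem_inter_iff,
        Set.mem_setOf_eq, Equiv.Perm.mul_apply]
      constructor
      · intro hh; exact ⟨p.2 w, rfl, hh⟩
      · rintro ⟨x, rfl, hh⟩; exact hh
    show IsOpen ((fun p : Equiv.Perm Wd × Equiv.Perm Wd =>
      ((p.1 * p.2 : Equiv.Perm Wd) : Wd → Wd) w) ⁻¹' {y})
    rw [h]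
    refine isOpen_iUnion fun x => IsOpen.inter ?_ ?_
    · exact IsOpen.preimage ((continuous_permApply w).comp continuous_snd) (isOpen_discrete {x})
    · exact IsOpen.preimage ((continuous_permApply x).comp continuous_fst) (isOpen_discrete {y})
  continuous_inv := by
    apply continuous_induced_rng.2
    apply continuous_pi
    intro w
    rw [continuous_discrete_rng]
    intro y
    have h : (fun g : Equiv.Perm Wd => ((g⁻¹ : Equiv.Perm Wd) : Wd → Wd) w) ⁻¹' {y}
        = {g : Equiv.Perm Wd | g y = w} := by
      ext g
      simp only [Set.mem_preimage, Set.mem_singleton_iff, Set.mem_setOf_eq]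
      constructor
      · rintro rfl; simp
      · intro hh; rw [← hh]; simp
    show IsOpen ((fun g : Equiv.Perm Wd => ((g⁻¹ : Equiv.Perm Wd) : Wd → Wd) w) ⁻¹' {y})
    rw [h]
    exact IsOpen.preimage (continuous_permApply y) (isOpen_discrete {w})

/-! ### The recursive generators `a₁ = σ`, `a₂ = (a₃⁻¹, a₂⁻¹)σ`, `a₃ = (a₂, a₃)` -/

mutual
  /-- The underlying function of `a₂`. -/
  def pA : Wd → Wd
    | [] => []
    | false :: w => true :: piA w
    | true :: w => false :: qiA w
  /-- The underlying function of `a₃`. -/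
  def qA : Wd → Wd
    | [] => []
    | false :: w => false :: pA w
    | true :: w => true :: qA w
  /-- The underlying function of `a₂⁻¹`. -/
  def piA : Wd → Wd
    | [] => []
    | false :: w => true :: qA w
    | true :: w => false :: pA w
  /-- The underlying function of `a₃⁻¹`. -/
  def qiA : Wd → Wd
    | [] => []
    | false :: w => false :: piA w
    | true :: w => true :: qiA w
end

lemma a_inv_lemma : ∀ w : Wd, pA (piA w) = w ∧ piA (pA w) = w ∧ qA (qiA w) = w ∧ qiA (qA w) = w := by
  intro w
  induction w with
  | nil => simp [pA, qA, piA, qiA]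
  | cons b w ih =>
    cases b <;>
      simp [pA, qA, piA, qiA, ih.1, ih.2.1, ih.2.2.1, ih.2.2.2]

/-- The generator `a₂`. -/
def a2 : Equiv.Perm Wd where
  toFun := pA
  invFun := piA
  left_inv w := (a_inv_lemma w).2.1
  right_inv w := (a_inv_lemma w).1

/-- The generator `a₃`. -/
def a3 : Equiv.Perm Wd where
  toFun := qA
  invFun := qiA
  left_inv w := (a_inv_lemma w).2.2.2
  right_inv w := (a_inv_lemma w).2.2.1

lemma a_length_lemma : ∀ w : Wd, (pA w).length = w.length ∧ (qA w).length = w.length ∧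
    (piA w).length = w.length ∧ (qiA w).length = w.length := by
  intro w
  induction w with
  | nil => simp [pA, qA, piA, qiA]
  | cons b w ih =>
    cases b <;>
      simp [pA, qA, piA, qiA, ih.1, ih.2.1, ih.2.2.1, ih.2.2.2]

lemma a_ne_nil {f : Wd → Wd} (hf : ∀ w : Wd, (f w).length = w.length) {w : Wd} (hw : w ≠ []) :
    f w ≠ [] := by
  intro h
  exact hw (List.eq_nil_of_length_eq_zero (by rw [← hf w, h]; rfl))

lemma a_dropLast_lemma : ∀ w : Wd, (pA w).dropLast = pA w.dropLast ∧
    (qA w).dropLast = qA w.dropLast ∧ (piA w).dropLast = piA w.dropLast ∧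
    (qiA w).dropLast = qiA w.dropLast := by
  intro w
  induction w with
  | nil => simp [pA, qA, piA, qiA]
  | cons b w ih =>
    rcases eq_or_ne w [] with rfl | hw
    · cases b <;> simp [pA, qA, piA, qiA]
    · have hp := a_ne_nil (fun w => (a_length_lemma w).1) hw
      have hq := a_ne_nil (fun w => (a_length_lemma w).2.1) hw
      have hpi := a_ne_nil (fun w => (a_length_lemma w).2.2.1) hw
      have hqi := a_ne_nil (fun w => (a_length_lemma w).2.2.2) hw
      cases b <;>
        simp [pA, qA, piA, qiA, List.dropLast_cons_of_ne_nil hw,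
          List.dropLast_cons_of_ne_nil hp, List.dropLast_cons_of_ne_nil hq,
          List.dropLast_cons_of_ne_nil hpi, List.dropLast_cons_of_ne_nil hqi,
          ih.1, ih.2.1, ih.2.2.1, ih.2.2.2]

lemma a2_mem : a2 ∈ OmegaSG :=
  ⟨fun w => (a_length_lemma w).1, fun w => (a_dropLast_lemma w).1⟩

lemma a3_mem : a3 ∈ OmegaSG :=
  ⟨fun w => (a_length_lemma w).2.1, fun w => (a_dropLast_lemma w).2.1⟩

/-- `a₁ = σ` as an element of `Ω`. -/
def A1 : OmegaSG := swapOm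
/-- `a₂` as an element of `Ω`. -/
def A2 : OmegaSG := ⟨a2, a2_mem⟩
/-- `a₃` as an element of `Ω`. -/
def A3 : OmegaSG := ⟨a3, a3_mem⟩

/-- `G = ⟨⟨a₁, a₃⟩⟩`, the topological closure of the subgroup generated by `a₁` and `a₃`:
a model of the geometric iterated monodromy group of `f(x) = 2/(x-1)²`. -/
noncomputable def Ggrp : Subgroup OmegaSG :=
  (Subgroup.closure {A1, A3}).topologicalClosure

/-- The normal closure in `G` of the closed subgroup generated by an element `c`:
the closed subgroup generated by all `G`-conjugates of `c`. -/
noncomputable def nclG (c : OmegaSG) : Subgroup OmegaSG :=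
  (Subgroup.closure {x | ∃ g ∈ Ggrp, x = g * c * g⁻¹}).topologicalClosure

/-- `U`, the normal closure in `G` of `⟨⟨a₂a₃⁻¹⟩⟩`. -/
noncomputable def Ugrp : Subgroup OmegaSG := nclG (A2 * A3⁻¹)

/-- `H₁`, the normal closure in `G` of `⟨⟨a₁⟩⟩`. -/
noncomputable def H1grp : Subgroup OmegaSG := nclG A1

/-- `H₃`, the normal closure in `G` of `⟨⟨a₃⟩⟩`. -/
noncomputable def H3grp : Subgroup OmegaSG := nclG A3

/-!
Write `c₁ = a₂a₃⁻¹` and `c₂ = a₃c₁a₃⁻¹`. The recursions give `a₁ = c₁a₃²`, `a₂⁴ = a₃⁴ = 1`,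
`a₃c₂a₃⁻¹ = c₁⁻¹`, `c₁c₂ = c₂c₁ = (c₂⁻¹, c₂)` and `c₁c₂⁻¹ = (c₁⁻¹, c₁)`. Hence `U₀ = ⟨c₁, c₂⟩` is
abelian and normalised by `a₃`, every element of `G₀ = ⟨a₁, a₃⟩` is `v a₃ᵏ` with `v ∈ U₀`, `U` is
the closure of `U₀`, and `β ↦ (β, β⁻¹)` maps `U₀` into `G₀`; passing to closures gives
`(x, x⁻¹) ∈ G` for `x ∈ U`.

Conversely, approximate `(x, x⁻¹)` near the root by some `v a₃ᵏ ∈ G₀`. As `(x, x⁻¹)` and `a₃` act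
trivially on the first level, `v` has sign `1` there, and such elements of `U₀` have the form
`(β, β⁻¹)` with `β ∈ U₀`. Since `a₃ᵏ = (a₂ᵏ, a₃ᵏ)`, the sections give `x ≈ β a₂ᵏ` and
`x⁻¹ ≈ β⁻¹ a₃ᵏ`, so near the root `β` conjugates `a₂ᵏ` to `a₃⁻ᵏ`. But `a₃` fixes the vertex `11`
while `a₂`, `a₂²`, `a₂³` move every vertex of level 2; hence `a₂ᵏ = 1` and `x ≈ β ∈ U₀`.
-/

lemma OmegaSG.ext {g h : OmegaSG} (H : ∀ w, g.1 w = h.1 w) : g = h :=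
  Subtype.ext (Equiv.ext H)

lemma pairOm_mul (u v u' v' : OmegaSG) :
    pairOm u v * pairOm u' v' = pairOm (u * u') (v * v') :=
  OmegaSG.ext fun w => by rcases w with _ | ⟨_ | _, w⟩ <;> rfl

def pairHom : OmegaSG × OmegaSG →* OmegaSG where
  toFun p := pairOm p.1 p.2
  map_one' := OmegaSG.ext fun w => by rcases w with _ | ⟨_ | _, w⟩ <;> rfl
  map_mul' p q := (pairOm_mul ..).symm

lemma pairOm_one : pairOm 1 1 = 1 := map_one pairHom

lemma pairOm_inv (u v : OmegaSG) : (pairOm u v)⁻¹ = pairOm u⁻¹ v⁻¹ :=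
  map_inv pairHom (u, v)

lemma pairOm_zpow (u v : OmegaSG) (n : ℤ) : pairOm u v ^ n = pairOm (u ^ n) (v ^ n) :=
  (map_zpow pairHom (u, v) n).symm

lemma pairOm_pow (u v : OmegaSG) (n : ℕ) : pairOm u v ^ n = pairOm (u ^ n) (v ^ n) :=
  (map_pow pairHom (u, v) n).symm

lemma A1_mul_pairOm (u v : OmegaSG) : A1 * pairOm u v = pairOm v u * A1 :=
  OmegaSG.ext fun w => by rcases w with _ | ⟨_ | _, w⟩ <;> rfl

lemma A3_eq_pairOm : A3 = pairOm A2 A3 :=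
  OmegaSG.ext fun w => by rcases w with _ | ⟨_ | _, w⟩ <;> rfl

lemma A2_eq_pairOm : A2 = pairOm A3⁻¹ A2⁻¹ * A1 :=
  OmegaSG.ext fun w => by rcases w with _ | ⟨_ | _, w⟩ <;> rfl

lemma A1_mul_self : A1 * A1 = 1 :=
  OmegaSG.ext fun w => by rcases w with _ | ⟨_ | _, w⟩ <;> rfl

lemma pairOm_mul_A1_mul (p q r s : OmegaSG) :
    pairOm p q * A1 * (pairOm r s * A1) = pairOm (p * s) (q * r) := by
  rw [mul_assoc, ← mul_assoc A1, A1_mul_pairOm, mul_assoc, A1_mul_self, mul_one, pairOm_mul]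

lemma A2_mul_A3 : A2 * A3 = A1 :=
  OmegaSG.ext fun w => by
    rcases w with _ | ⟨_ | _, w⟩
    · rfl
    · exact congrArg (true :: ·) ((a_inv_lemma w).2.1)
    · exact congrArg (false :: ·) ((a_inv_lemma w).2.2.2)

lemma A2_pow_four : A2 ^ 4 = 1 := by
  have hsq : A2 ^ 2 = pairOm (A2 * A3)⁻¹ (A3 * A2)⁻¹ := by
    conv_lhs => rw [pow_two, A2_eq_pairOm]
    rw [pairOm_mul_A1_mul, mul_inv_rev, mul_inv_rev]
  have hA1 : A1 ^ 2 = 1 := (pow_two A1).trans A1_mul_self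
  have hA3A2 : (A3 * A2) ^ 2 = 1 := by
    rw [show (A3 * A2) ^ 2 = A2⁻¹ * (A2 * A3) ^ 2 * A2 by simp only [pow_two]; group,
      A2_mul_A3, hA1]
    group
  rw [show 4 = 2 * 2 from rfl, pow_mul, hsq, pairOm_pow, inv_pow, inv_pow, A2_mul_A3, hA1, hA3A2,
    inv_one, pairOm_one]

lemma A3_pow_eq_pairOm (k : ℕ) : A3 ^ k = pairOm (A2 ^ k) (A3 ^ k) := by
  rw [← pairOm_pow, ← A3_eq_pairOm]

lemma A3_pow_four : A3 ^ 4 = 1 := by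
  have h := A3_pow_eq_pairOm 4
  rw [A2_pow_four] at h
  -- `A3 ^ 4 = (1, A3 ^ 4)` determines `A3 ^ 4` only through induction on the word
  refine OmegaSG.ext fun w => ?_
  induction w with
  | nil => rfl
  | cons b w ih =>
    rw [h]
    cases b
    · rfl
    · exact congrArg (true :: ·) ih

lemma A1_inv : A1⁻¹ = A1 := inv_eq_of_mul_eq_one_left A1_mul_self

lemma A2_eq : A2 = A1 * A3⁻¹ := by rw [← A2_mul_A3]; group

lemma inv_sq_of_pow_four {G : Type*} [Group G] {g : G} (h : g ^ 4 = 1) : g⁻¹ ^ 2 = g ^ 2 := by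
  rw [inv_pow, inv_eq_of_mul_eq_one_left (a := g ^ 2) (by rw [← pow_add, h])]

def c₁ : OmegaSG := A2 * A3⁻¹

def c₂ : OmegaSG := A3 * c₁ * A3⁻¹

lemma c₁_eq : c₁ = A1 * A3 ^ 2 := by
  rw [c₁, A2_eq, ← inv_sq_of_pow_four A3_pow_four]; group

lemma c₂_eq : c₂ = A3 * A1 * A3 := by
  rw [c₂, c₁_eq]; group

lemma c₁_inv_eq : c₁⁻¹ = A3 ^ 2 * A1 := by
  rw [c₁_eq, mul_inv_rev, A1_inv, ← inv_pow, inv_sq_of_pow_four A3_pow_four]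

lemma c₂_inv_eq : c₂⁻¹ = A3⁻¹ * A1 * A3⁻¹ := by
  rw [c₂_eq, mul_inv_rev, mul_inv_rev, A1_inv, mul_assoc]

lemma A3_mul_c₂_mul_A3_inv : A3 * c₂ * A3⁻¹ = c₁⁻¹ := by
  rw [c₂_eq, c₁_inv_eq, pow_two]; group

lemma inv_pairOm_mul_A1 (u v : OmegaSG) : (pairOm u v * A1)⁻¹ = pairOm v⁻¹ u⁻¹ * A1 := by
  rw [mul_inv_rev, A1_inv, pairOm_inv, A1_mul_pairOm]

lemma c₁_eq_pairOm : c₁ = pairOm (A3 ^ 2) (A2 ^ 2) * A1 := by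
  rw [c₁_eq]
  nth_rw 1 [A3_eq_pairOm]
  rw [pairOm_pow, A1_mul_pairOm]

lemma c₂_eq_pairOm : c₂ = pairOm A1 (A3 * A2) * A1 := by
  rw [c₂_eq]
  nth_rw 1 [A3_eq_pairOm]
  nth_rw 2 [A3_eq_pairOm]
  rw [mul_assoc, A1_mul_pairOm, ← mul_assoc, pairOm_mul, A2_mul_A3]

lemma mul_A1_mul_A1 (g : OmegaSG) : g * A1 * A1 = g := by
  rw [mul_assoc, A1_mul_self, mul_one]

lemma c₂_mul_c₁ : c₂ * c₁ = pairOm c₂⁻¹ c₂ := by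
  rw [c₂_eq_pairOm, c₁_eq_pairOm, pairOm_mul_A1_mul, ← c₂_eq_pairOm]
  congr 1
  · rw [c₂_inv_eq, A2_eq]
    simp only [pow_two, ← mul_assoc, A1_mul_self, one_mul]
  · rw [c₂_eq, A2_eq]
    simp only [pow_two]
    group

lemma c₁_mul_c₂ : c₁ * c₂ = pairOm c₂⁻¹ c₂ := by
  rw [c₂_eq_pairOm, c₁_eq_pairOm, pairOm_mul_A1_mul, ← c₂_eq_pairOm]
  congr 1
  · rw [c₂_inv_eq, A2_eq, ← inv_sq_of_pow_four A3_pow_four]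
    simp only [pow_two]
    group
  · rw [c₂_eq, ← inv_sq_of_pow_four A2_pow_four, A2_eq]
    simp only [pow_two, mul_inv_rev, A1_inv, inv_inv, ← mul_assoc, mul_A1_mul_A1]

lemma c₁_mul_c₂_inv : c₁ * c₂⁻¹ = pairOm c₁⁻¹ c₁ := by
  rw [c₂_eq_pairOm, c₁_eq_pairOm, inv_pairOm_mul_A1, pairOm_mul_A1_mul, ← c₁_eq_pairOm, A1_inv]
  congr 1
  · exact c₁_inv_eq.symm
  · rw [c₁]
    simp only [pow_two]
    group

lemma commute_c₁_c₂ : Commute c₁ c₂ := c₁_mul_c₂.trans c₂_mul_c₁.symm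

lemma Commute.zpow_mul_zpow_mul_zpow_mul_zpow {G : Type*} [Group G] {a b : G} (h : Commute a b)
    (s t s' t' : ℤ) : a ^ s * b ^ t * (a ^ s' * b ^ t') = a ^ (s + s') * b ^ (t + t') := by
  rw [mul_assoc, ← mul_assoc (b ^ t), ((h.zpow_zpow s' t).eq).symm, zpow_add, zpow_add]
  group

def U0 : Subgroup OmegaSG := Subgroup.closure {c₁, c₂}

def G0 : Subgroup OmegaSG := Subgroup.closure {A1, A3}

lemma c₁_mem_U0 : c₁ ∈ U0 := Subgroup.subset_closure (by simp)

lemma c₂_mem_U0 : c₂ ∈ U0 := Subgroup.subset_closure (by simp)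

instance : IsMulCommutative U0 :=
  Subgroup.isMulCommutative_closure <| by
    rintro _ (rfl | rfl) _ (rfl | rfl)
    exacts [rfl, commute_c₁_c₂.eq, commute_c₁_c₂.eq.symm, rfl]

lemma exists_eq_zpow_mul_zpow_of_mem_U0 {v : OmegaSG} (hv : v ∈ U0) :
    ∃ s t : ℤ, v = c₁ ^ s * c₂ ^ t := by
  induction hv using Subgroup.closure_induction with
  | mem x hx =>
    rcases hx with rfl | rfl
    exacts [⟨1, 0, by simp⟩, ⟨0, 1, by simp⟩]
  | one => exact ⟨0, 0, by simp⟩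
  | mul x y _ _ hx hy =>
    obtain ⟨s, t, rfl⟩ := hx
    obtain ⟨s', t', rfl⟩ := hy
    exact ⟨s + s', t + t', commute_c₁_c₂.zpow_mul_zpow_mul_zpow_mul_zpow s t s' t'⟩
  | inv x _ hx =>
    obtain ⟨s, t, rfl⟩ := hx
    refine ⟨-s, -t, ?_⟩
    rw [mul_inv_rev, ← zpow_neg, ← zpow_neg, ((commute_c₁_c₂.zpow_zpow (-s) (-t)).eq).symm]

lemma A3_mul_mul_inv_mem_U0 {v : OmegaSG} (hv : v ∈ U0) : A3 * v * A3⁻¹ ∈ U0 := by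
  have : U0 ≤ U0.comap (MulAut.conj A3).toMonoidHom := by
    rw [U0, Subgroup.closure_le]
    rintro _ (rfl | rfl)
    · exact c₂_mem_U0
    · show A3 * c₂ * A3⁻¹ ∈ U0
      rw [A3_mul_c₂_mul_A3_inv]
      exact inv_mem c₁_mem_U0
  exact this hv

lemma A3_pow_mul_mul_inv_mem_U0 (k : ℕ) {v : OmegaSG} (hv : v ∈ U0) :
    A3 ^ k * v * (A3 ^ k)⁻¹ ∈ U0 := by
  induction k with
  | zero => simpa using hv
  | succ k ih =>
    rw [pow_succ', mul_inv_rev, show A3 * A3 ^ k * v * ((A3 ^ k)⁻¹ * A3⁻¹)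
      = A3 * (A3 ^ k * v * (A3 ^ k)⁻¹) * A3⁻¹ by group]
    exact A3_mul_mul_inv_mem_U0 ih

lemma exists_eq_mul_A3_pow_of_mem_G0 {g : OmegaSG} (hg : g ∈ G0) :
    ∃ v ∈ U0, ∃ k : ℕ, g = v * A3 ^ k := by
  induction hg using Subgroup.closure_induction with
  | mem x hx =>
    rcases hx with rfl | rfl
    · exact ⟨c₁, c₁_mem_U0, 2, by rw [c₁_eq, mul_assoc, ← pow_add, A3_pow_four, mul_one]⟩
    · exact ⟨1, one_mem _, 1, by simp⟩
  | one => exact ⟨1, one_mem _, 0, by simp⟩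
  | mul x y _ _ hx hy =>
    obtain ⟨v, hv, k, rfl⟩ := hx
    obtain ⟨w, hw, l, rfl⟩ := hy
    refine ⟨v * (A3 ^ k * w * (A3 ^ k)⁻¹), mul_mem hv (A3_pow_mul_mul_inv_mem_U0 k hw), k + l, ?_⟩
    rw [pow_add]
    group
  | inv x _ hx =>
    obtain ⟨v, hv, k, rfl⟩ := hx
    have h : (A3 ^ k)⁻¹ = A3 ^ (3 * k) := by
      rw [inv_eq_iff_mul_eq_one, ← pow_add, show k + 3 * k = 4 * k by ring, pow_mul, A3_pow_four,
        one_pow]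
    refine ⟨A3 ^ (3 * k) * v⁻¹ * (A3 ^ (3 * k))⁻¹,
      A3_pow_mul_mul_inv_mem_U0 _ (inv_mem hv), 3 * k, ?_⟩
    rw [mul_inv_rev, h]
    group

lemma mul_c₁_mul_inv_mem_U0 {g : OmegaSG} (hg : g ∈ G0) : g * c₁ * g⁻¹ ∈ U0 := by
  obtain ⟨v, hv, k, rfl⟩ := exists_eq_mul_A3_pow_of_mem_G0 hg
  rw [show v * A3 ^ k * c₁ * (v * A3 ^ k)⁻¹ = v * (A3 ^ k * c₁ * (A3 ^ k)⁻¹) * v⁻¹ by group]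
  exact mul_mem (mul_mem hv (A3_pow_mul_mul_inv_mem_U0 k c₁_mem_U0)) (inv_mem hv)

lemma A3_mem_Ggrp : A3 ∈ Ggrp :=
  Subgroup.le_topologicalClosure _ (Subgroup.subset_closure (by simp))

lemma Ugrp_eq_topologicalClosure_U0 : Ugrp = U0.topologicalClosure := by
  refine le_antisymm (Subgroup.topologicalClosure_minimal _ ?_ U0.isClosed_topologicalClosure)
    (Subgroup.topologicalClosure_mono ?_)
  · rw [Subgroup.closure_le]
    rintro _ ⟨g, hg, rfl⟩
    exact map_mem_closure (f := fun g => g * c₁ * g⁻¹) (by fun_prop) hg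
      fun _ => mul_c₁_mul_inv_mem_U0
  · rw [U0, Subgroup.closure_le]
    rintro _ (rfl | rfl)
    · exact Subgroup.subset_closure ⟨1, one_mem _, by rw [c₁]; group⟩
    · exact Subgroup.subset_closure ⟨A3, A3_mem_Ggrp, rfl⟩

def AgreeUpTo (n : ℕ) (g h : OmegaSG) : Prop := ∀ w : Wd, w.length ≤ n → g.1 w = h.1 w

lemma AgreeUpTo.mono {m n : ℕ} {g h : OmegaSG} (hmn : m ≤ n) (H : AgreeUpTo n g h) :
    AgreeUpTo m g h :=
  fun w hw => H w (hw.trans hmn)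

lemma AgreeUpTo.inv {n : ℕ} {g h : OmegaSG} (H : AgreeUpTo n g h) : AgreeUpTo n g⁻¹ h⁻¹ := by
  intro w hw
  apply g.1.injective
  rw [H _ ((mem_omega_length (h⁻¹).2 w).trans_le hw)]
  simp

lemma agreeUpTo_pairOm_iff {n : ℕ} {u v u' v' : OmegaSG} :
    AgreeUpTo (n + 1) (pairOm u v) (pairOm u' v') ↔ AgreeUpTo n u u' ∧ AgreeUpTo n v v' := by
  refine ⟨fun H => ⟨fun w hw => ?_, fun w hw => ?_⟩, fun ⟨Hu, Hv⟩ w hw => ?_⟩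
  · simpa [pairOm] using H (false :: w) (by simpa using hw)
  · simpa [pairOm] using H (true :: w) (by simpa using hw)
  · rcases w with _ | ⟨_ | _, w⟩
    · rfl
    · simpa [pairOm] using Hu w (by simpa using hw)
    · simpa [pairOm] using Hv w (by simpa using hw)

lemma mem_topologicalClosure_iff_forall_agreeUpTo {H : Subgroup OmegaSG} {g : OmegaSG} :
    g ∈ H.topologicalClosure ↔ ∀ n, ∃ h ∈ H, AgreeUpTo n g h := by
  rw [← SetLike.mem_coe, Subgroup.topologicalClosure_coe, mem_closure_iff]
  refine ⟨fun hg n => ?_, fun hg o ho hgo => ?_⟩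
  · have hO : IsOpen (⋂ w ∈ {w : Wd | w.length ≤ n}, {k : OmegaSG | k.1 w = g.1 w}) :=
      (List.finite_length_le Bool n).isOpen_biInter fun w _ =>
        (isOpen_discrete {g.1 w}).preimage
          ((continuous_permApply w).comp continuous_subtype_val)
    obtain ⟨k, hkO, hkH⟩ := hg _ hO (Set.mem_iInter₂.mpr fun _ _ => rfl)
    exact ⟨k, hkH, fun w hw => (Set.mem_iInter₂.mp hkO w hw).symm⟩
  · obtain ⟨U, hU, rfl⟩ := isOpen_induced_iff.mp ho
    obtain ⟨W, hW, rfl⟩ := isOpen_induced_iff.mp hU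
    obtain ⟨I, u, hu, hsub⟩ := isOpen_pi_iff.mp hW _ hgo
    obtain ⟨k, hkH, hk⟩ := hg (I.sup List.length)
    refine ⟨k, hsub fun w hw => ?_, hkH⟩
    show k.1 w ∈ u w
    rw [← hk w (Finset.le_sup hw)]
    exact (hu w hw).2

lemma A3_pow_apply_true_true (k : ℕ) : (A3 ^ k).1 [true, true] = [true, true] := by
  induction k with
  | zero => rfl
  | succ k ih => rw [pow_succ]; exact ih

lemma A2_pow_eq_one_of_apply_eq {k : ℕ} {w : Wd} (hw : 2 ≤ w.length) (h : (A2 ^ k).1 w = w) :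
    A2 ^ k = 1 := by
  obtain ⟨b₁, b₂, w, rfl⟩ : ∃ b₁ b₂ w', w = b₁ :: b₂ :: w' := by
    rcases w with _ | ⟨b₁, _ | ⟨b₂, w⟩⟩
    · simp at hw
    · simp at hw
    · exact ⟨b₁, b₂, w, rfl⟩
  rw [pow_eq_pow_mod k A2_pow_four] at h ⊢
  have : k % 4 < 4 := Nat.mod_lt _ (by norm_num)
  interval_cases (k % 4)
  · rfl
  all_goals cases b₁ <;> cases b₂ <;> simp [pow_succ, A2, a2, pA, piA, qiA] at h

lemma A2_pow_eq_one_of_agreeUpTo {x β : OmegaSG} {n k : ℕ} (hn : 2 ≤ n)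
    (h₁ : AgreeUpTo n x (β * A2 ^ k)) (h₂ : AgreeUpTo n x⁻¹ (β⁻¹ * A3 ^ k)) : A2 ^ k = 1 := by
  set z := (β⁻¹).1 [true, true]
  have hzlen : z.length = 2 := mem_omega_length (β⁻¹).2 _
  have hxz : (x⁻¹).1 [true, true] = z := by
    rw [h₂ _ (by simpa using hn)]
    exact congrArg (β⁻¹).1 (A3_pow_apply_true_true k)
  have hx : x.1 z = [true, true] := by rw [← hxz]; simp
  have hβ : β.1 ((A2 ^ k).1 z) = [true, true] := by rw [← hx, h₁ z (by omega)]; rfl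
  refine A2_pow_eq_one_of_apply_eq hzlen.ge ?_
  calc (A2 ^ k).1 z = (β⁻¹).1 (β.1 ((A2 ^ k).1 z)) := by simp
    _ = z := by rw [hβ]

def sgnHom (n : ℕ) : OmegaSG →* ℤˣ := Equiv.Perm.sign.comp (levelHom n)

lemma AgreeUpTo.sgnHom_eq {n : ℕ} {g h : OmegaSG} (H : AgreeUpTo n g h) :
    sgnHom n g = sgnHom n h :=
  congrArg Equiv.Perm.sign (Equiv.ext fun w => Subtype.ext (H w.1 w.2.le))

lemma sgnHom_one_c₁ : sgnHom 1 c₁ = -1 := by decide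

lemma sgnHom_one_c₂ : sgnHom 1 c₂ = -1 := by decide

lemma sgnHom_one_A3 : sgnHom 1 A3 = 1 := by decide

lemma sgnHom_one_pairOm (u v : OmegaSG) : sgnHom 1 (pairOm u v) = 1 := by
  have : levelHom 1 (pairOm u v) = 1 := Equiv.ext fun ⟨w, hw⟩ => Subtype.ext <| by
    obtain ⟨b, rfl⟩ := List.length_eq_one_iff.mp hw
    cases b <;> simp [levelHom, levelPerm, pairOm, mem_omega_nil u.2, mem_omega_nil v.2]
  simp [sgnHom, this]

lemma pairOm_mul_pairOm_inv {β γ : OmegaSG} (h : Commute β γ) :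
    pairOm β β⁻¹ * pairOm γ γ⁻¹ = pairOm (β * γ) (β * γ)⁻¹ := by
  rw [pairOm_mul, mul_inv_rev, h.inv_inv.eq]

lemma U0_le_G0 : U0 ≤ G0 := by
  have hA1 : A1 ∈ G0 := Subgroup.subset_closure (by simp)
  have hA3 : A3 ∈ G0 := Subgroup.subset_closure (by simp)
  have hc₁ : c₁ ∈ G0 := by
    rw [c₁_eq]; exact mul_mem hA1 (pow_mem hA3 2)
  rw [U0, Subgroup.closure_le]
  rintro _ (rfl | rfl)
  exacts [hc₁, mul_mem (mul_mem hA3 hc₁) (inv_mem hA3)]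

lemma pairOm_mem_G0_of_mem_U0 {β : OmegaSG} (hβ : β ∈ U0) : pairOm β β⁻¹ ∈ G0 := by
  induction hβ using Subgroup.closure_induction with
  | mem x hx =>
    rcases hx with rfl | rfl
    · have h := congrArg (·⁻¹) c₁_mul_c₂_inv
      simp only [pairOm_inv, inv_inv] at h
      rw [← h]
      exact inv_mem (mul_mem (U0_le_G0 c₁_mem_U0) (inv_mem (U0_le_G0 c₂_mem_U0)))
    · have h := congrArg (·⁻¹) c₂_mul_c₁
      simp only [pairOm_inv, inv_inv] at h
      rw [← h]
      exact inv_mem (mul_mem (U0_le_G0 c₂_mem_U0) (U0_le_G0 c₁_mem_U0))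
  | one => rw [inv_one, pairOm_one]; exact one_mem _
  | mul x y hx hy hxG hyG =>
    rw [← pairOm_mul_pairOm_inv (setLike_mul_comm (s := U0) hx hy)]
    exact mul_mem hxG hyG
  | inv x _ hxG =>
    rw [inv_inv, ← inv_inv x, ← pairOm_inv, inv_inv]
    exact inv_mem hxG

lemma exists_eq_pairOm_of_sgnHom_eq_one {v : OmegaSG} (hv : v ∈ U0) (h : sgnHom 1 v = 1) :
    ∃ β ∈ U0, v = pairOm β β⁻¹ := by
  obtain ⟨s, t, rfl⟩ := exists_eq_zpow_mul_zpow_of_mem_U0 hv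
  obtain ⟨m, hm⟩ : Even (s + t) := by
    by_contra hodd
    rw [map_mul, map_zpow, map_zpow, sgnHom_one_c₁, sgnHom_one_c₂, ← zpow_add,
      (Int.not_even_iff_odd.mp hodd).neg_one_zpow] at h
    exact absurd h (by decide)
  have key : c₁ ^ s * c₂ ^ t = (c₁ * c₂) ^ m * (c₁ * c₂⁻¹) ^ (s - m) := by
    rw [commute_c₁_c₂.mul_zpow, commute_c₁_c₂.inv_right.mul_zpow, inv_zpow',
      commute_c₁_c₂.zpow_mul_zpow_mul_zpow_mul_zpow]
    congr 2 <;> omega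
  refine ⟨c₂⁻¹ ^ m * c₁⁻¹ ^ (s - m),
    mul_mem (zpow_mem (inv_mem c₂_mem_U0) _) (zpow_mem (inv_mem c₁_mem_U0) _), ?_⟩
  rw [key, c₁_mul_c₂, c₁_mul_c₂_inv, pairOm_zpow, pairOm_zpow, pairOm_mul, mul_inv_rev, inv_zpow,
    inv_zpow, inv_inv, inv_inv, (commute_c₁_c₂.zpow_zpow (s - m) m).eq]

lemma pairOm_mem_Ggrp_of_mem_Ugrp {x : OmegaSG} (hx : x ∈ Ugrp) : pairOm x x⁻¹ ∈ Ggrp := by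
  rw [Ugrp_eq_topologicalClosure_U0, mem_topologicalClosure_iff_forall_agreeUpTo] at hx
  rw [Ggrp, mem_topologicalClosure_iff_forall_agreeUpTo]
  intro n
  obtain ⟨v, hv, H⟩ := hx n
  exact ⟨pairOm v v⁻¹, pairOm_mem_G0_of_mem_U0 hv,
    (agreeUpTo_pairOm_iff.mpr ⟨H, H.inv⟩).mono n.le_succ⟩

lemma mem_Ugrp_of_pairOm_mem_Ggrp {x : OmegaSG} (hx : pairOm x x⁻¹ ∈ Ggrp) : x ∈ Ugrp := by
  rw [Ggrp, mem_topologicalClosure_iff_forall_agreeUpTo] at hx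
  rw [Ugrp_eq_topologicalClosure_U0, mem_topologicalClosure_iff_forall_agreeUpTo]
  intro n
  -- one level is spent on the sections, and the sections must agree up to level 2
  obtain ⟨g, hg, H⟩ := hx (n + 3)
  obtain ⟨v, hv, k, rfl⟩ := exists_eq_mul_A3_pow_of_mem_G0 hg
  have hsgn : sgnHom 1 v = 1 := by
    have := (H.mono (by omega : 1 ≤ n + 3)).sgnHom_eq
    rwa [sgnHom_one_pairOm, map_mul, map_pow, sgnHom_one_A3, one_pow, mul_one, eq_comm] at this
  obtain ⟨β, hβ, rfl⟩ := exists_eq_pairOm_of_sgnHom_eq_one hv hsgn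
  rw [A3_pow_eq_pairOm, pairOm_mul] at H
  obtain ⟨h₁, h₂⟩ := agreeUpTo_pairOm_iff.mp H
  rw [A2_pow_eq_one_of_agreeUpTo (by omega) h₁ h₂, mul_one] at h₁
  exact ⟨β, hβ, h₁.mono (by omega)⟩

/-- `x ∈ U` iff `(x, x⁻¹) ∈ G`. -/
theorem stmt14 : ∀ x : OmegaSG, x ∈ Ugrp ↔ pairOm x x⁻¹ ∈ Ggrp :=
  fun _ => ⟨pairOm_mem_Ggrp_of_mem_Ugrp, mem_Ugrp_of_pairOm_mem_Ggrp⟩
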